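/- arXiv:2111.06037 — 2 statements merged into one kernel-verified Lean document; each statement's English description precedes it below -/
import Mathlib

section
/- Let f : {0,1,…,B}^I → ℝ≥0 be monotone and lattice submodular, let F be a downward-closed family of vectors, and let ψ be a monotone α-CRS for F with respect to q. If v ∼ q and u ∼ ψ(v), then E[f(u)] ≥ α·E_{v∼q}[f(v)]. -/
open Finset

/-- A vector assigns to each item in `I` a state in `{0, 1, …, B}`. -/
abbrev Vec (I : Type) (B : ℕ) := I → Fin (B + 1)

section CRS

variable {I : Type} [Fintype I] [DecidableEq I] {B : ℕ}

/-- `q` assigns to each item a probability distribution on `{0, 1, …, B}`. -/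
def IsDist (q : I → Fin (B + 1) → ℝ) : Prop :=
  (∀ i j, 0 ≤ q i j) ∧ ∀ i, ∑ j, q i j = 1

/-- Probability of the vector `v` when coordinates are drawn independently from `q`. -/
def vecProb (q : I → Fin (B + 1) → ℝ) (v : Vec I B) : ℝ := ∏ i, q i (v i)

/-- A randomized mapping: for each vector `v`, `ψ v` is a probability distribution on vectors. -/
def IsKernel (ψ : Vec I B → Vec I B → ℝ) : Prop :=
  (∀ v u, 0 ≤ ψ v u) ∧ ∀ v, ∑ u, ψ v u = 1

/-- A family of vectors is downward closed. -/
def DownwardClosed (F : Set (Vec I B)) : Prop :=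
  ∀ ⦃u v : Vec I B⦄, u ≤ v → v ∈ F → u ∈ F

/-- `ψ` is an `α`-contention resolution scheme for `F` with respect to `q`:
it is a randomized mapping whose output always lies in `F` and keeps each coordinate
of the input or zeroes it out, and each nonzero coordinate value is kept with
(unconditional joint) probability at least `α` times its occurrence probability. -/
def IsCRS (q : I → Fin (B + 1) → ℝ) (F : Set (Vec I B)) (α : ℝ)
    (ψ : Vec I B → Vec I B → ℝ) : Prop :=
  IsKernel ψ ∧
  (∀ v u, ψ v u ≠ 0 → u ∈ F ∧ ∀ i, u i = 0 ∨ u i = v i) ∧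
  ∀ (i : I) (j : Fin (B + 1)), j ≠ 0 →
    ∑ v : Vec I B, ∑ u : Vec I B,
        (if v i = j ∧ u i = j then vecProb q v * ψ v u else 0) ≥
      α * ∑ v : Vec I B, (if v i = j then vecProb q v else 0)

/-- A CRS is monotone if the probability of keeping coordinate `i` does not increase
when the input vector grows (keeping coordinate `i` fixed). -/
def MonotoneCRS (ψ : Vec I B → Vec I B → ℝ) : Prop :=
  ∀ (u v : Vec I B) (i : I), u ≤ v → u i = v i →
    ∑ w : Vec I B, (if w i = u i then ψ u w else 0) ≥
      ∑ w : Vec I B, (if w i = v i then ψ v w else 0)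

end CRS

/-- `f` is lattice submodular: for `u ≤ v`, the marginal gain of raising coordinate `i`
to `s` is at least as large at `u` as at `v`. -/
def LatticeSubmodular {I : Type} [Fintype I] [DecidableEq I] {B : ℕ}
    (f : Vec I B → ℝ) : Prop :=
  ∀ u v : Vec I B, u ≤ v → ∀ (i : I) (s : Fin (B + 1)),
    f (v ⊔ fun j => if j = i then s else (0 : Fin (B + 1))) - f v ≤
      f (u ⊔ fun j => if j = i then s else (0 : Fin (B + 1))) - f u


set_option linter.unusedSectionVars false
set_option linter.unusedVariables false
set_option maxHeartbeats 1000000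

section AuxCRS
variable {I : Type} [Fintype I] [DecidableEq I] {B : ℕ}

private def trunc (e : I ≃ Fin (Fintype.card I)) (v : Vec I B) (t : ℕ) : Vec I B :=
  fun k => if (e k : ℕ) < t then v k else 0

private lemma trunc_zero (e : I ≃ Fin (Fintype.card I)) (v : Vec I B) :
    trunc e v 0 = fun _ => 0 := by
  funext k; simp [trunc]

private lemma trunc_card (e : I ≃ Fin (Fintype.card I)) (v : Vec I B) :
    trunc e v (Fintype.card I) = v := by
  funext k; simp [trunc, (e k).isLt]

private lemma trunc_mono (e : I ≃ Fin (Fintype.card I)) {u v : Vec I B} (h : u ≤ v) (t : ℕ) :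
    trunc e u t ≤ trunc e v t := by
  intro k
  simp only [trunc]
  split
  · exact h k
  · exact le_refl _

private lemma trunc_le_succ (e : I ≃ Fin (Fintype.card I)) (v : Vec I B) (t : ℕ) :
    trunc e v t ≤ trunc e v (t + 1) := by
  intro k
  simp only [trunc]
  by_cases h : (e k : ℕ) < t
  · rw [if_pos h, if_pos (Nat.lt_succ_of_lt h)]
  · rw [if_neg h]; exact Fin.zero_le _

private lemma sup_pad_zero (w : Vec I B) (i : I) :
    (w ⊔ fun j => if j = i then (0 : Fin (B+1)) else 0) = w := by
  funext k
  simp only [Pi.sup_apply, ite_self]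
  exact sup_eq_left.mpr (Fin.zero_le _)

private lemma trunc_succ (e : I ≃ Fin (Fintype.card I)) (v : Vec I B) (i : I) :
    trunc e v ((e i : ℕ) + 1) = trunc e v (e i) ⊔ fun j => if j = i then v i else 0 := by
  funext k
  simp only [trunc, Pi.sup_apply]
  by_cases hk : k = i
  · subst hk
    simp [Nat.lt_succ_iff]
  · have hne : (e k : ℕ) ≠ (e i : ℕ) := fun h => hk (e.injective (Fin.val_injective h))
    rw [if_neg hk]
    have : ((e k : ℕ) < (e i : ℕ) + 1) ↔ ((e k : ℕ) < (e i : ℕ)) := by omega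
    simp only [this]
    exact (sup_eq_left.mpr (Fin.zero_le _)).symm

private lemma fkg_antitone {α : Type*} [DistribLattice α] [Fintype α] (μ f g : α → ℝ)
    (hμ₀ : ∀ a, 0 ≤ μ a) (hf₀ : ∀ a, 0 ≤ f a) (hg₀ : ∀ a, 0 ≤ g a)
    (hf : Antitone f) (hg : Antitone g)
    (hμ : ∀ a b, μ a * μ b ≤ μ (a ⊓ b) * μ (a ⊔ b)) :
    (∑ a, μ a * f a) * ∑ a, μ a * g a ≤ (∑ a, μ a * (f a * g a)) * ∑ a, μ a := by
  classical
  refine four_functions_theorem_univ (μ * f) (μ * g) (μ * (f * g)) μ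
    (fun a => mul_nonneg (hμ₀ a) (hf₀ a)) (fun a => mul_nonneg (hμ₀ a) (hg₀ a))
    (fun a => mul_nonneg (hμ₀ a) (mul_nonneg (hf₀ a) (hg₀ a))) hμ₀ (fun a b => ?_)
  dsimp only [Pi.mul_apply]
  calc μ a * f a * (μ b * g b) = (μ a * μ b) * (f a * g b) := by ring
    _ ≤ (μ (a ⊓ b) * μ (a ⊔ b)) * (f (a ⊓ b) * g (a ⊓ b)) := by
        refine mul_le_mul (hμ a b) ?_ (mul_nonneg (hf₀ a) (hg₀ b))
          (mul_nonneg (hμ₀ _) (hμ₀ _))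
        exact mul_le_mul (hf inf_le_left) (hg inf_le_right) (hg₀ b) (hf₀ _)
    _ = μ (a ⊓ b) * (f (a ⊓ b) * g (a ⊓ b)) * μ (a ⊔ b) := by ring

private lemma vecProb_mod (q : I → Fin (B + 1) → ℝ) (a b : Vec I B) :
    vecProb q a * vecProb q b = vecProb q (a ⊓ b) * vecProb q (a ⊔ b) := by
  unfold vecProb
  rw [← Finset.prod_mul_distrib, ← Finset.prod_mul_distrib]
  refine Finset.prod_congr rfl fun i _ => ?_
  simp only [Pi.inf_apply, Pi.sup_apply]
  rcases le_total (a i) (b i) with h | h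
  · rw [inf_eq_left.mpr h, sup_eq_right.mpr h]
  · rw [inf_eq_right.mpr h, sup_eq_left.mpr h, mul_comm]

private lemma core_ij (q : I → Fin (B + 1) → ℝ) (hq0 : ∀ i j, 0 ≤ q i j)
    (α : ℝ) (ψ : Vec I B → Vec I B → ℝ) (hψ0 : ∀ v u, 0 ≤ ψ v u)
    (hmono : MonotoneCRS ψ)
    (f : Vec I B → ℝ) (hfmono : Monotone f) (hfsub : LatticeSubmodular f)
    (e : I ≃ Fin (Fintype.card I)) (i : I) (j : Fin (B + 1))
    (hguar : α * ∑ v : Vec I B, (if v i = j then vecProb q v else 0) ≤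
      ∑ v : Vec I B, ∑ u : Vec I B, (if v i = j ∧ u i = j then vecProb q v * ψ v u else 0)) :
    α * ∑ v : Vec I B, (if v i = j then
        vecProb q v * (f (trunc e v ((e i : ℕ) + 1)) - f (trunc e v (e i : ℕ))) else 0) ≤
      ∑ v : Vec I B, (if v i = j then
        vecProb q v * ((∑ w : Vec I B, if w i = v i then ψ v w else 0) *
          (f (trunc e v ((e i : ℕ) + 1)) - f (trunc e v (e i : ℕ)))) else 0) := by
  classical
  set μ' : Vec I B → ℝ := fun v => if v i = j then vecProb q v else 0 with hμ'
  set G : Vec I B → ℝ :=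
    fun v => f (trunc e v (e i) ⊔ fun k => if k = i then j else 0) - f (trunc e v (e i)) with hG
  set Bf : Vec I B → ℝ :=
    fun v => ∑ w : Vec I B, if w i = j then ψ (Function.update v i j) w else 0 with hBf
  have hμ'0 : ∀ v, 0 ≤ μ' v := by
    intro v; rw [hμ']; dsimp only
    split
    · exact Finset.prod_nonneg fun k _ => hq0 k _
    · exact le_refl 0
  have hG0 : ∀ v, 0 ≤ G v := fun v => sub_nonneg.mpr (hfmono le_sup_left)
  have hGanti : Antitone G := fun a b hab =>
    hfsub (trunc e a (e i)) (trunc e b (e i)) (trunc_mono e hab _) i j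
  have hBf0 : ∀ v, 0 ≤ Bf v := by
    intro v; rw [hBf]; dsimp only
    refine Finset.sum_nonneg fun w _ => ?_
    split
    · exact hψ0 _ _
    · exact le_refl 0
  have hBfanti : Antitone Bf := by
    intro a b hab
    have hle : Function.update a i j ≤ Function.update b i j := by
      intro k
      by_cases hk : k = i
      · subst hk; simp
      · simp only [Function.update_of_ne hk]; exact hab k
    have heq : Function.update a i j i = Function.update b i j i := by simp
    have := hmono (Function.update a i j) (Function.update b i j) i hle heq
    simpa [hBf] using this
  have hμ'mod : ∀ a b, μ' a * μ' b ≤ μ' (a ⊓ b) * μ' (a ⊔ b) := by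
    intro a b
    by_cases ha : a i = j
    · by_cases hb : b i = j
      · have hinf : (a ⊓ b) i = j := by
          show a i ⊓ b i = j
          rw [ha, hb, inf_idem]
        have hsup : (a ⊔ b) i = j := by
          show a i ⊔ b i = j
          rw [ha, hb, sup_idem]
        rw [hμ']; dsimp only
        rw [if_pos ha, if_pos hb, if_pos hinf, if_pos hsup]
        exact (vecProb_mod q a b).le
      · rw [hμ']; dsimp only
        rw [if_neg hb, mul_zero]
        exact mul_nonneg (hμ'0 _) (hμ'0 _)
    · rw [hμ']; dsimp only
      rw [if_neg ha, zero_mul]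
      exact mul_nonneg (hμ'0 _) (hμ'0 _)
  have hL : (∑ v : Vec I B, (if v i = j then
      vecProb q v * (f (trunc e v ((e i : ℕ) + 1)) - f (trunc e v (e i : ℕ))) else 0))
      = ∑ v : Vec I B, μ' v * G v := by
    refine Finset.sum_congr rfl fun v _ => ?_
    by_cases hv : v i = j
    · rw [if_pos hv, hμ', hG]; dsimp only
      rw [if_pos hv, trunc_succ e v i, hv]
    · rw [if_neg hv, hμ']; dsimp only
      rw [if_neg hv, zero_mul]
  have hR : (∑ v : Vec I B, (if v i = j then
      vecProb q v * ((∑ w : Vec I B, if w i = v i then ψ v w else 0) *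
        (f (trunc e v ((e i : ℕ) + 1)) - f (trunc e v (e i : ℕ)))) else 0))
      = ∑ v : Vec I B, μ' v * (Bf v * G v) := by
    refine Finset.sum_congr rfl fun v _ => ?_
    by_cases hv : v i = j
    · rw [if_pos hv, hμ', hG, hBf]; dsimp only
      rw [if_pos hv, trunc_succ e v i, hv]
      congr 2
      · refine Finset.sum_congr rfl fun w _ => ?_
        rw [← hv, Function.update_eq_self]
    · rw [if_neg hv, hμ']; dsimp only
      rw [if_neg hv, zero_mul]
  have hS : (∑ v : Vec I B, ∑ u : Vec I B,
      (if v i = j ∧ u i = j then vecProb q v * ψ v u else 0))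
      = ∑ v : Vec I B, μ' v * Bf v := by
    refine Finset.sum_congr rfl fun v _ => ?_
    by_cases hv : v i = j
    · rw [hμ', hBf]; dsimp only
      rw [if_pos hv, Finset.mul_sum]
      refine Finset.sum_congr rfl fun u _ => ?_
      by_cases hu : u i = j
      · rw [if_pos ⟨hv, hu⟩, if_pos hu, ← hv, Function.update_eq_self]
      · rw [if_neg (fun h => hu h.2), if_neg hu, mul_zero]
    · rw [hμ']; dsimp only
      rw [if_neg hv, zero_mul]
      refine Finset.sum_eq_zero fun u _ => ?_
      rw [if_neg (fun h => hv h.1)]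
  rw [hL, hR]
  rw [hS] at hguar
  have hguar' : α * ∑ v : Vec I B, μ' v ≤ ∑ v : Vec I B, μ' v * Bf v := by
    rw [hμ']; dsimp only
    convert hguar using 2
  have hfkg := fkg_antitone μ' Bf G hμ'0 hBf0 hG0 hBfanti hGanti hμ'mod
  set P := ∑ v : Vec I B, μ' v with hP
  set T2 := ∑ v : Vec I B, μ' v * G v with hT2
  set T1 := ∑ v : Vec I B, μ' v * (Bf v * G v) with hT1
  have hT2nonneg : 0 ≤ T2 :=
    Finset.sum_nonneg fun v _ => mul_nonneg (hμ'0 v) (hG0 v)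
  have hPnonneg : 0 ≤ P := Finset.sum_nonneg fun v _ => hμ'0 v
  rcases eq_or_lt_of_le hPnonneg with hP0 | hP0
  · have hall : ∀ v ∈ (univ : Finset (Vec I B)), μ' v = 0 :=
      (Finset.sum_eq_zero_iff_of_nonneg (fun v _ => hμ'0 v)).mp hP0.symm
    have hT2z : T2 = 0 := Finset.sum_eq_zero fun v hv => by rw [hall v hv, zero_mul]
    have hT1z : T1 = 0 := Finset.sum_eq_zero fun v hv => by rw [hall v hv, zero_mul]
    rw [hT2z, hT1z, mul_zero]
  · have h1 : P * (α * T2) ≤ P * T1 := by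
      calc P * (α * T2) = (α * P) * T2 := by ring
        _ ≤ (∑ v : Vec I B, μ' v * Bf v) * T2 := mul_le_mul_of_nonneg_right hguar' hT2nonneg
        _ ≤ T1 * P := hfkg
        _ = P * T1 := mul_comm _ _
    exact le_of_mul_le_mul_left h1 hP0

private lemma telescope_sum (f : Vec I B → ℝ) (e : I ≃ Fin (Fintype.card I)) (v : Vec I B) :
    ∑ i : I, (f (trunc e v ((e i : ℕ) + 1)) - f (trunc e v (e i : ℕ)))
      = f v - f (fun _ => 0) := by
  have h1 : ∑ i : I, (f (trunc e v ((e i : ℕ) + 1)) - f (trunc e v (e i : ℕ)))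
      = ∑ t : Fin (Fintype.card I), (f (trunc e v ((t : ℕ) + 1)) - f (trunc e v (t : ℕ))) :=
    Equiv.sum_comp e (fun t : Fin (Fintype.card I) =>
      f (trunc e v ((t : ℕ) + 1)) - f (trunc e v (t : ℕ)))
  rw [h1, Fin.sum_univ_eq_sum_range (fun t => f (trunc e v (t + 1)) - f (trunc e v t)),
    Finset.sum_range_sub (fun t => f (trunc e v t)), trunc_card, trunc_zero]

private lemma key_lower (f : Vec I B → ℝ) (hfmono : Monotone f) (hfsub : LatticeSubmodular f)
    (e : I ≃ Fin (Fintype.card I)) (v u : Vec I B) (huv : u ≤ v) :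
    f (fun _ => 0) + ∑ i : I,
        (if u i = v i then f (trunc e v ((e i : ℕ) + 1)) - f (trunc e v (e i : ℕ)) else 0)
      ≤ f u := by
  have h2 : ∑ i : I,
      (if u i = v i then f (trunc e v ((e i : ℕ) + 1)) - f (trunc e v (e i : ℕ)) else 0)
      ≤ ∑ i : I, (f (trunc e u ((e i : ℕ) + 1)) - f (trunc e u (e i : ℕ))) := by
    refine Finset.sum_le_sum fun i _ => ?_
    by_cases h : u i = v i
    · rw [if_pos h, trunc_succ e u i, trunc_succ e v i, h]
      exact hfsub (trunc e u (e i)) (trunc e v (e i)) (trunc_mono e huv _) i (v i)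
    · rw [if_neg h]
      exact sub_nonneg.mpr (hfmono (trunc_le_succ e u _))
  have h3 := telescope_sum f e u
  linarith

private lemma inner_sum_eq (ψv : Vec I B → ℝ) (hψ1 : ∑ u : Vec I B, ψv u = 1)
    (c m : ℝ) (G : I → ℝ) (vv : Vec I B) :
    ∑ u : Vec I B, m * ψv u * (c + ∑ i : I, (if u i = vv i then G i else 0))
      = m * c + ∑ i : I, (∑ u : Vec I B, if u i = vv i then ψv u else 0) * (m * G i) := by
  have key : ∀ u : Vec I B, m * ψv u * (c + ∑ i : I, (if u i = vv i then G i else 0))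
      = (m * c) * ψv u + ∑ i : I, (if u i = vv i then ψv u else 0) * (m * G i) := by
    intro u
    rw [mul_add]
    congr 1
    · ring
    · rw [Finset.mul_sum]
      refine Finset.sum_congr rfl fun i _ => ?_
      by_cases h : u i = vv i
      · rw [if_pos h, if_pos h]; ring
      · rw [if_neg h, if_neg h, mul_zero, zero_mul]
  rw [Finset.sum_congr rfl fun u _ => key u, Finset.sum_add_distrib, ← Finset.mul_sum, hψ1,
    mul_one]
  congr 1
  rw [Finset.sum_comm]
  exact Finset.sum_congr rfl fun i _ => (Finset.sum_mul _ _ _).symm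

end AuxCRS

/-- If `f` is a nonnegative, monotone, lattice-submodular function and `ψ` is a monotone
`α`-CRS for a downward-closed family `F` with respect to `q`, then drawing `v ∼ q` and
`u ∼ ψ v` gives `E[f u] ≥ α ⬝ E[f v]`. -/

theorem expected_value_CRS {I : Type} [Fintype I] [DecidableEq I] {B : ℕ}
    (q : I → Fin (B + 1) → ℝ) (hq : IsDist q)
    (F : Set (Vec I B)) (hdc : DownwardClosed F)
    (α : ℝ) (hα : α ∈ Set.Icc (0 : ℝ) 1)
    (ψ : Vec I B → Vec I B → ℝ) (hψ : IsCRS q F α ψ) (hmono : MonotoneCRS ψ)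
    (f : Vec I B → ℝ) (hf0 : ∀ v, 0 ≤ f v) (hfmono : Monotone f)
    (hfsub : LatticeSubmodular f) :
    ∑ v : Vec I B, ∑ u : Vec I B, vecProb q v * ψ v u * f u ≥
      α * ∑ v : Vec I B, vecProb q v * f v := by
  classical
  obtain ⟨hq0, hq1⟩ := hq
  obtain ⟨⟨hψ0, hψ1⟩, hψsupp, hψguar⟩ := hψ
  obtain ⟨hα0, hα1⟩ := hα
  set e := Fintype.equivFin I with he
  have hμ0 : ∀ v : Vec I B, 0 ≤ vecProb q v := fun v => Finset.prod_nonneg fun k _ => hq0 k _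
  have hμ1 : ∑ v : Vec I B, vecProb q v = 1 := by
    have h : ∑ v : Vec I B, vecProb q v = ∏ i : I, ∑ j : Fin (B + 1), q i j :=
      (Finset.prod_univ_sum _ _).symm
    rw [h]
    rw [Finset.prod_congr rfl fun i _ => hq1 i, Finset.prod_const_one]
  have hC : (0 : ℝ) ≤ f (fun _ => 0) := hf0 _
  -- Step 1: pointwise lower bound via lattice submodularity
  have step1 : ∑ v : Vec I B, ∑ u : Vec I B, vecProb q v * ψ v u *
      (f (fun _ => 0) + ∑ i : I, (if u i = v i then
        f (trunc e v ((e i : ℕ) + 1)) - f (trunc e v (e i : ℕ)) else 0))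
      ≤ ∑ v : Vec I B, ∑ u : Vec I B, vecProb q v * ψ v u * f u := by
    refine Finset.sum_le_sum fun v _ => Finset.sum_le_sum fun u _ => ?_
    by_cases h : ψ v u = 0
    · simp [h]
    · obtain ⟨-, hcoord⟩ := hψsupp v u h
      have huv : u ≤ v := by
        intro k
        rcases hcoord k with h0 | h1
        · rw [h0]; exact Fin.zero_le _
        · exact le_of_eq h1
      exact mul_le_mul_of_nonneg_left (key_lower f hfmono hfsub e v u huv)
        (mul_nonneg (hμ0 v) (hψ0 v u))
  -- Step 2: compute the left-hand side of step1
  have step2 : ∑ v : Vec I B, ∑ u : Vec I B, vecProb q v * ψ v u *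
      (f (fun _ => 0) + ∑ i : I, (if u i = v i then
        f (trunc e v ((e i : ℕ) + 1)) - f (trunc e v (e i : ℕ)) else 0))
      = f (fun _ => 0) + ∑ i : I, ∑ v : Vec I B,
          (∑ u : Vec I B, if u i = v i then ψ v u else 0) *
            (vecProb q v * (f (trunc e v ((e i : ℕ) + 1)) - f (trunc e v (e i : ℕ)))) := by
    have hv : ∀ v : Vec I B, ∑ u : Vec I B, vecProb q v * ψ v u *
        (f (fun _ => 0) + ∑ i : I, (if u i = v i then
          f (trunc e v ((e i : ℕ) + 1)) - f (trunc e v (e i : ℕ)) else 0))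
        = vecProb q v * f (fun _ => 0) + ∑ i : I,
            (∑ u : Vec I B, if u i = v i then ψ v u else 0) *
              (vecProb q v * (f (trunc e v ((e i : ℕ) + 1)) - f (trunc e v (e i : ℕ)))) :=
      fun v => inner_sum_eq (ψ v) (hψ1 v) (f (fun _ => 0)) (vecProb q v)
        (fun i => f (trunc e v ((e i : ℕ) + 1)) - f (trunc e v (e i : ℕ))) v
    rw [Finset.sum_congr rfl fun v _ => hv v, Finset.sum_add_distrib, ← Finset.sum_mul, hμ1,
      one_mul, Finset.sum_comm]
  -- Step 3: per-coordinate CRS bound via FKG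
  have step3 : ∀ i : I,
      α * ∑ v : Vec I B,
          vecProb q v * (f (trunc e v ((e i : ℕ) + 1)) - f (trunc e v (e i : ℕ)))
      ≤ ∑ v : Vec I B, (∑ u : Vec I B, if u i = v i then ψ v u else 0) *
          (vecProb q v * (f (trunc e v ((e i : ℕ) + 1)) - f (trunc e v (e i : ℕ)))) := by
    intro i
    have hsplit : ∀ X : Vec I B → ℝ, ∑ v : Vec I B, X v
        = ∑ j : Fin (B + 1), ∑ v : Vec I B, (if v i = j then X v else 0) := by
      intro X
      rw [Finset.sum_comm]
      exact (Finset.sum_congr rfl fun v _ => by simp).symm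
    rw [hsplit (fun v => vecProb q v *
        (f (trunc e v ((e i : ℕ) + 1)) - f (trunc e v (e i : ℕ)))), Finset.mul_sum,
      hsplit (fun v => (∑ u : Vec I B, if u i = v i then ψ v u else 0) *
        (vecProb q v * (f (trunc e v ((e i : ℕ) + 1)) - f (trunc e v (e i : ℕ)))))]
    refine Finset.sum_le_sum fun j _ => ?_
    have hrw : ∑ v : Vec I B, (if v i = j then
          (∑ u : Vec I B, if u i = v i then ψ v u else 0) *
            (vecProb q v * (f (trunc e v ((e i : ℕ) + 1)) - f (trunc e v (e i : ℕ)))) else 0)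
        = ∑ v : Vec I B, (if v i = j then
            vecProb q v * ((∑ u : Vec I B, if u i = v i then ψ v u else 0) *
              (f (trunc e v ((e i : ℕ) + 1)) - f (trunc e v (e i : ℕ)))) else 0) := by
      refine Finset.sum_congr rfl fun v _ => ?_
      by_cases hv : v i = j
      · rw [if_pos hv, if_pos hv]; ring
      · rw [if_neg hv, if_neg hv]
    rw [hrw]
    by_cases hj : j = 0
    · subst hj
      have hz : ∀ v : Vec I B, v i = 0 →
          f (trunc e v ((e i : ℕ) + 1)) - f (trunc e v (e i : ℕ)) = 0 := by
        intro v hv0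
        rw [trunc_succ e v i, hv0, sup_pad_zero, sub_self]
      have e1 : ∑ v : Vec I B, (if v i = 0 then vecProb q v *
          (f (trunc e v ((e i : ℕ) + 1)) - f (trunc e v (e i : ℕ))) else 0) = 0 :=
        Finset.sum_eq_zero fun v _ => by
          by_cases hv : v i = 0
          · rw [if_pos hv, hz v hv, mul_zero]
          · rw [if_neg hv]
      have e2 : ∑ v : Vec I B, (if v i = 0 then vecProb q v *
          ((∑ u : Vec I B, if u i = v i then ψ v u else 0) *
            (f (trunc e v ((e i : ℕ) + 1)) - f (trunc e v (e i : ℕ)))) else 0) = 0 :=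
        Finset.sum_eq_zero fun v _ => by
          by_cases hv : v i = 0
          · rw [if_pos hv, hz v hv, mul_zero, mul_zero]
          · rw [if_neg hv]
      rw [e1, e2, mul_zero]
    · exact core_ij q hq0 α ψ hψ0 hmono f hfmono hfsub e i j (hψguar i j hj)
  -- Step 4: total marginal sum equals the expectation
  have step4 : ∑ i : I, ∑ v : Vec I B,
      vecProb q v * (f (trunc e v ((e i : ℕ) + 1)) - f (trunc e v (e i : ℕ)))
      = (∑ v : Vec I B, vecProb q v * f v) - f (fun _ => 0) := by
    rw [Finset.sum_comm]
    have hvv : ∀ v : Vec I B, ∑ i : I,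
        vecProb q v * (f (trunc e v ((e i : ℕ) + 1)) - f (trunc e v (e i : ℕ)))
        = vecProb q v * f v - vecProb q v * f (fun _ => 0) := by
      intro v
      rw [← Finset.mul_sum, telescope_sum f e v, mul_sub]
    rw [Finset.sum_congr rfl fun v _ => hvv v, Finset.sum_sub_distrib, ← Finset.sum_mul, hμ1,
      one_mul]
  have hW : α * ((∑ v : Vec I B, vecProb q v * f v) - f (fun _ => 0))
      ≤ ∑ i : I, ∑ v : Vec I B,
          (∑ u : Vec I B, if u i = v i then ψ v u else 0) *
            (vecProb q v * (f (trunc e v ((e i : ℕ) + 1)) - f (trunc e v (e i : ℕ)))) := by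
    rw [← step4, Finset.mul_sum]
    exact Finset.sum_le_sum fun i _ => step3 i
  rw [ge_iff_le]
  nlinarith [step1, step2, hW, hC, hα1]
end

section
/- Let f : {0,1,…,B}^I → ℝ≥0 be monotone and lattice submodular, and let F¹,…,F^k be downward-closed families of vectors such that for each t ∈ {1,…,k} there exists a monotone α_t-CRS for F^t with respect to q. Then there exists a randomized mapping ψ such that: (i) for every vector v, every u in the support of ψ(v) lies in ⋂_{t=1}^k F^t and satisfies u(i) ∈ {0, v(i)} for all i ∈ I; and (ii) if v ∼ q and u ∼ ψ(v) then E[f(u)] ≥ (∏_{t=1}^k α_t)·E_{v∼q}[f(v)]. -/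
open Finset

/-!
Apply the given schemes one after another. Each scheme only zeroes out coordinates and every
`F t` is downward closed, so the final output lies in all of them.

For the value, enumerate `I` and write `f v - f 0` as the telescoping sum of the marginal gains
of raising the coordinates of `v` one at a time. By submodularity the output `u` collects, for
every coordinate it keeps, at least that coordinate's gain at `v`. By monotonicity of the schemes,
the composed scheme keeps coordinate `i` with probability at least the product of the individual
keep probabilities. Conditioned on `v i = j`, the gain and these keep probabilities are antitone
in `v`, and the conditioned product distribution is log-supermodular, so Harris' inequality bounds
the expected product below by the product of the expectations; each keep probability has
conditional expectation at least `α t` by the CRS property.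
-/

section Harris

variable {α β ι : Type*} [DistribLattice α] [Fintype α]
  [CommSemiring β] [LinearOrder β] [IsStrictOrderedRing β] [ExistsAddOfLE β]

theorem fkg_of_antitone (μ f g : α → β) (hμ₀ : 0 ≤ μ) (hf₀ : 0 ≤ f) (hg₀ : 0 ≤ g)
    (hf : Antitone f) (hg : Antitone g) (hμ : ∀ a b, μ a * μ b ≤ μ (a ⊓ b) * μ (a ⊔ b)) :
    (∑ a, μ a * f a) * ∑ a, μ a * g a ≤ (∑ a, μ a) * ∑ a, μ a * (f a * g a) :=
  fkg (α := αᵒᵈ) f g μ hμ₀ hf₀ hg₀ hf.dual_left hg.dual_left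
    fun a b => (hμ a b).trans_eq (mul_comm _ _)

theorem sum_mul_prod_sum_le_of_antitone (μ g : α → β) (h : ι → α → β) (s : Finset ι)
    (hμ₀ : 0 ≤ μ) (hμ : ∀ a b, μ a * μ b ≤ μ (a ⊓ b) * μ (a ⊔ b))
    (hg₀ : 0 ≤ g) (hg : Antitone g) (hh₀ : ∀ t, 0 ≤ h t) (hh : ∀ t, Antitone (h t)) :
    (∑ a, μ a * g a) * ∏ t ∈ s, ∑ a, μ a * h t a ≤
      (∑ a, μ a) ^ #s * ∑ a, μ a * (g a * ∏ t ∈ s, h t a) := by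
  classical
  induction s using Finset.induction_on generalizing g with
  | empty => simp
  | insert t s hts ih =>
    have hgh := ih (g * h t) (mul_nonneg hg₀ (hh₀ t))
      fun a b hab => mul_le_mul (hg hab) (hh t hab) (hh₀ t b) (hg₀ a)
    calc (∑ a, μ a * g a) * ∏ t ∈ insert t s, ∑ a, μ a * h t a
        = (∑ a, μ a * g a) * (∑ a, μ a * h t a) * ∏ t ∈ s, ∑ a, μ a * h t a := by
          rw [prod_insert hts, mul_assoc]
      _ ≤ (∑ a, μ a) * (∑ a, μ a * (g * h t) a) * ∏ t ∈ s, ∑ a, μ a * h t a :=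
          mul_le_mul_of_nonneg_right (fkg_of_antitone μ g (h t) hμ₀ hg₀ (hh₀ t) hg (hh t) hμ)
            (prod_nonneg fun t _ => sum_nonneg fun a _ => mul_nonneg (hμ₀ a) (hh₀ t a))
      _ ≤ (∑ a, μ a) * ((∑ a, μ a) ^ #s * ∑ a, μ a * ((g * h t) a * ∏ t ∈ s, h t a)) := by
          rw [mul_assoc]
          exact mul_le_mul_of_nonneg_left hgh (sum_nonneg fun a _ => hμ₀ a)
      _ = (∑ a, μ a) ^ #(insert t s) * ∑ a, μ a * (g a * ∏ t ∈ insert t s, h t a) := by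
          simp only [card_insert_of_notMem hts, prod_insert hts, Pi.mul_apply, pow_succ, mul_assoc]
          ring

end Harris

section ProductDistribution

variable {I : Type} [Fintype I] {B : ℕ} {q : I → Fin (B + 1) → ℝ}

theorem vecProb_nonneg (hq : IsDist q) (v : Vec I B) : 0 ≤ vecProb q v :=
  prod_nonneg fun i _ => hq.1 i (v i)

theorem vecProb_inf_mul_vecProb_sup (a b : Vec I B) :
    vecProb q (a ⊓ b) * vecProb q (a ⊔ b) = vecProb q a * vecProb q b := by
  simp only [vecProb, ← prod_mul_distrib]
  refine prod_congr rfl fun i _ => ?_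
  rcases le_total (a i) (b i) with h | h
  · simp [inf_of_le_left h, sup_of_le_right h]
  · simp [inf_of_le_right h, sup_of_le_left h, mul_comm]

def fiberProb (q : I → Fin (B + 1) → ℝ) (i : I) (j : Fin (B + 1)) (v : Vec I B) : ℝ :=
  if v i = j then vecProb q v else 0

theorem fiberProb_nonneg (hq : IsDist q) (i : I) (j : Fin (B + 1)) (v : Vec I B) :
    0 ≤ fiberProb q i j v := by
  unfold fiberProb
  split_ifs
  exacts [vecProb_nonneg hq v, le_rfl]

theorem fiberProb_mul_fiberProb_le (hq : IsDist q) (i : I) (j : Fin (B + 1)) (a b : Vec I B) :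
    fiberProb q i j a * fiberProb q i j b ≤
      fiberProb q i j (a ⊓ b) * fiberProb q i j (a ⊔ b) := by
  have hprod := mul_nonneg (fiberProb_nonneg hq i j (a ⊓ b)) (fiberProb_nonneg hq i j (a ⊔ b))
  by_cases ha : a i = j
  · by_cases hb : b i = j
    · have hinf : (a ⊓ b) i = j := by simp [ha, hb]
      have hsup : (a ⊔ b) i = j := by simp [ha, hb]
      simp only [fiberProb, ha, hb, hinf, hsup, if_true, vecProb_inf_mul_vecProb_sup, le_rfl]
    · simpa [fiberProb, hb] using hprod
  · simpa [fiberProb, ha] using hprod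

variable [DecidableEq I]

theorem sum_vecProb (hq : IsDist q) : ∑ v : Vec I B, vecProb q v = 1 := by
  simp only [vecProb, ← Fintype.prod_sum, hq.2, prod_const_one]

theorem sum_fiberProb_mul_update (i : I) (j : Fin (B + 1)) (φ : Vec I B → Vec I B → ℝ) :
    ∑ v, fiberProb q i j v * φ v (Function.update v i j) = ∑ v, fiberProb q i j v * φ v v := by
  refine sum_congr rfl fun v _ => ?_
  by_cases h : v i = j
  · rw [← h, Function.update_eq_self]
  · simp [fiberProb, h]

theorem sum_vecProb_mul_eq_sum_sum_fiberProb (i : I) (X : Fin (B + 1) → Vec I B → ℝ) :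
    ∑ v, vecProb q v * X (v i) v = ∑ j, ∑ v, fiberProb q i j v * X j v := by
  rw [sum_comm]
  refine sum_congr rfl fun v _ => ?_
  simp [fiberProb, ite_mul]

end ProductDistribution

section Kernel

variable {I : Type} {B : ℕ} {κ ψ : Vec I B → Vec I B → ℝ}

theorem le_of_forall_eq_zero_or_eq {u v : Vec I B} (h : ∀ i, u i = 0 ∨ u i = v i) : u ≤ v :=
  fun i => (h i).elim (fun h0 => h0 ▸ Fin.zero_le _) le_of_eq

def KeepsOrZeroes (ψ : Vec I B → Vec I B → ℝ) : Prop :=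
  ∀ v u, ψ v u ≠ 0 → ∀ i, u i = 0 ∨ u i = v i

theorem KeepsOrZeroes.le (h : KeepsOrZeroes ψ) {v u : Vec I B} (hvu : ψ v u ≠ 0) : u ≤ v :=
  le_of_forall_eq_zero_or_eq (h v u hvu)

variable [Fintype I] [DecidableEq I]

/-- `MonotoneCRS ψ` says that `keepProb ψ i` is antitone on each set `{v | v i = j}`. -/
def keepProb (ψ : Vec I B → Vec I B → ℝ) (i : I) (v : Vec I B) : ℝ :=
  ∑ w, if w i = v i then ψ v w else 0

def kernelComp (κ ψ : Vec I B → Vec I B → ℝ) (v u : Vec I B) : ℝ :=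
  ∑ w, κ v w * ψ w u

def kernelSeq : (k : ℕ) → (Fin k → Vec I B → Vec I B → ℝ) → Vec I B → Vec I B → ℝ
  | 0, _ => fun v u => if u = v then 1 else 0
  | k + 1, Ψ => kernelComp (kernelSeq k fun t => Ψ t.castSucc) (Ψ (Fin.last k))

theorem IsCRS.keepsOrZeroes {q : I → Fin (B + 1) → ℝ} {F : Set (Vec I B)} {α : ℝ}
    (h : IsCRS q F α ψ) : KeepsOrZeroes ψ :=
  fun v u hvu => (h.2.1 v u hvu).2

theorem exists_ne_zero_of_kernelComp_ne_zero {v u : Vec I B} (h : kernelComp κ ψ v u ≠ 0) :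
    ∃ w, κ v w ≠ 0 ∧ ψ w u ≠ 0 := by
  obtain ⟨w, -, hw⟩ := exists_ne_zero_of_sum_ne_zero h
  exact ⟨w, left_ne_zero_of_mul hw, right_ne_zero_of_mul hw⟩

theorem IsKernel.kernelComp (hκ : IsKernel κ) (hψ : IsKernel ψ) : IsKernel (kernelComp κ ψ) := by
  refine ⟨fun v u => sum_nonneg fun w _ => mul_nonneg (hκ.1 v w) (hψ.1 w u), fun v => ?_⟩
  simp only [_root_.kernelComp, sum_comm (γ := Vec I B), ← mul_sum, hψ.2, mul_one, hκ.2]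

theorem KeepsOrZeroes.kernelComp (hκ : KeepsOrZeroes κ) (hψ : KeepsOrZeroes ψ) :
    KeepsOrZeroes (kernelComp κ ψ) := by
  intro v u h i
  obtain ⟨w, hvw, hwu⟩ := exists_ne_zero_of_kernelComp_ne_zero h
  rcases hψ w u hwu i with hu | hu
  · exact .inl hu
  · exact hu ▸ hκ v w hvw i

theorem keepProb_nonneg (hψ : IsKernel ψ) (i : I) (v : Vec I B) : 0 ≤ keepProb ψ i v :=
  sum_nonneg fun w _ => by split_ifs <;> simp [hψ.1 v w]

/-- An intermediate output `w` of `κ` that kept coordinate `i` satisfies `w ≤ v` and `w i = v i`,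
so by monotonicity `ψ` keeps `i` from `w` at least as likely as from `v`. -/
theorem keepProb_mul_le_keepProb_kernelComp (hκ : IsKernel κ) (hκ' : KeepsOrZeroes κ)
    (hψ : IsKernel ψ) (hψ' : MonotoneCRS ψ) (i : I) (v : Vec I B) :
    keepProb κ i v * keepProb ψ i v ≤ keepProb (kernelComp κ ψ) i v := by
  have hrhs : keepProb (kernelComp κ ψ) i v =
      ∑ w, κ v w * ∑ u, if u i = v i then ψ w u else 0 := by
    simp only [keepProb, _root_.kernelComp, mul_sum, mul_ite, mul_zero]
    rw [sum_comm]
    exact sum_congr rfl fun u _ => by split_ifs <;> simp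
  rw [hrhs, keepProb, sum_mul]
  refine sum_le_sum fun w _ => ?_
  split_ifs with hw
  · by_cases hvw : κ v w = 0
    · simp [hvw]
    · have := hψ' w v i (hκ'.le hvw) hw
      rw [← hw]
      exact mul_le_mul_of_nonneg_left this (hκ.1 v w)
  · simpa using mul_nonneg (hκ.1 v w) (sum_nonneg fun u _ => by split_ifs <;> simp [hψ.1 w u])

variable {k : ℕ} {Ψ : Fin k → Vec I B → Vec I B → ℝ}

theorem isKernel_kernelSeq (hΨ : ∀ t, IsKernel (Ψ t)) : IsKernel (kernelSeq k Ψ) := by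
  induction k with
  | zero =>
    refine ⟨fun v u => ?_, fun v => by simp [kernelSeq]⟩
    simp only [kernelSeq]
    split_ifs <;> norm_num
  | succ k ih => exact (ih fun t => hΨ t.castSucc).kernelComp (hΨ _)

theorem keepsOrZeroes_kernelSeq (hΨ : ∀ t, KeepsOrZeroes (Ψ t)) :
    KeepsOrZeroes (kernelSeq k Ψ) := by
  induction k with
  | zero =>
    intro v u h i
    simp only [kernelSeq, ne_eq, ite_eq_right_iff, Classical.not_imp] at h
    exact .inr (h.1 ▸ rfl)
  | succ k ih => exact (ih fun t => hΨ t.castSucc).kernelComp (hΨ _)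

theorem mem_of_kernelSeq_ne_zero {F : Fin k → Set (Vec I B)} (hF : ∀ t, DownwardClosed (F t))
    (hΨF : ∀ t v u, Ψ t v u ≠ 0 → u ∈ F t) (hΨ : ∀ t, KeepsOrZeroes (Ψ t)) {v u : Vec I B}
    (h : kernelSeq k Ψ v u ≠ 0) (t : Fin k) : u ∈ F t := by
  induction k generalizing u with
  | zero => exact t.elim0
  | succ k ih =>
    obtain ⟨w, hvw, hwu⟩ := exists_ne_zero_of_kernelComp_ne_zero h
    induction t using Fin.lastCases with
    | last => exact hΨF _ w u hwu
    | cast s =>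
      exact hF _ ((hΨ _).le hwu) (ih (fun t => hF _) (fun t => hΨF _) (fun t => hΨ _) hvw s)

theorem prod_keepProb_le_keepProb_kernelSeq (hΨ : ∀ t, IsKernel (Ψ t))
    (hΨ' : ∀ t, KeepsOrZeroes (Ψ t)) (hmono : ∀ t, MonotoneCRS (Ψ t)) (i : I) (v : Vec I B) :
    ∏ t, keepProb (Ψ t) i v ≤ keepProb (kernelSeq k Ψ) i v := by
  induction k with
  | zero =>
    rw [keepProb, sum_eq_single v (fun w _ hw => by simp [kernelSeq, hw]) (by simp)]
    simp [kernelSeq]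
  | succ k ih =>
    rw [Fin.prod_univ_castSucc]
    have hΨ₀ := fun t => hΨ (Fin.castSucc t)
    have hΨ₀' := fun t => hΨ' (Fin.castSucc t)
    calc (∏ t : Fin k, keepProb (Ψ t.castSucc) i v) * keepProb (Ψ (Fin.last k)) i v
        ≤ keepProb (kernelSeq k fun t => Ψ t.castSucc) i v * keepProb (Ψ (Fin.last k)) i v :=
          mul_le_mul_of_nonneg_right (ih hΨ₀ hΨ₀' fun t => hmono _) (keepProb_nonneg (hΨ _) i v)
      _ ≤ keepProb (kernelSeq (k + 1) Ψ) i v :=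
          keepProb_mul_le_keepProb_kernelComp (isKernel_kernelSeq hΨ₀)
            (keepsOrZeroes_kernelSeq hΨ₀') (hΨ _) (hmono _) i v

end Kernel

section Gain

variable {I : Type} [Fintype I] [DecidableEq I] {B : ℕ} (e : I ≃ Fin (Fintype.card I))
  {f : Vec I B → ℝ}

theorem LatticeSubmodular.sub_le (hf : LatticeSubmodular f) {u v : Vec I B} (huv : u ≤ v) (i : I)
    (s : Fin (B + 1)) : f (v ⊔ Pi.single i s) - f v ≤ f (u ⊔ Pi.single i s) - f u := by
  simpa only [← Pi.single_apply] using hf u v huv i s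

def truncate (m : ℕ) (v : Vec I B) : Vec I B :=
  fun i => if (e i : ℕ) < m then v i else 0

omit [DecidableEq I] in
theorem truncate_mono (m : ℕ) : Monotone (truncate e m : Vec I B → Vec I B) :=
  fun u v huv i => by unfold truncate; split_ifs <;> simp [huv i]

theorem truncate_succ (i : I) (v : Vec I B) :
    truncate e (e i + 1) v = truncate e (e i) v ⊔ Pi.single i (v i) := by
  funext i'
  by_cases h : i' = i
  · subst h; simp [truncate]
  · have : (e i' : ℕ) ≠ e i := fun h' => h (e.injective (Fin.ext h'))
    simp only [truncate, Pi.sup_apply, Pi.single_apply, h, if_false, Nat.lt_succ_iff_lt_or_eq, this,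
      or_false]
    split_ifs <;> simp

def gain (f : Vec I B → ℝ) (i : I) (s : Fin (B + 1)) (v : Vec I B) : ℝ :=
  f (truncate e (e i) v ⊔ Pi.single i s) - f (truncate e (e i) v)

theorem gain_zero (i : I) (v : Vec I B) : gain e f i 0 v = 0 := by
  rw [gain, Pi.single_zero, sup_eq_left.2 fun _ => Fin.zero_le _, sub_self]

theorem gain_nonneg (hf : Monotone f) (i : I) (s : Fin (B + 1)) (v : Vec I B) :
    0 ≤ gain e f i s v :=
  sub_nonneg.2 (hf le_sup_left)

theorem gain_antitone (hf : LatticeSubmodular f) (i : I) (s : Fin (B + 1)) :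
    Antitone (gain e f i s) :=
  fun _ _ huv => hf.sub_le (truncate_mono e _ huv) i s

theorem sum_gain (v : Vec I B) : ∑ i, gain e f i (v i) v = f v - f 0 := by
  have hzero : truncate e 0 v = 0 := funext fun i => by simp [truncate]
  have hcard : truncate e (Fintype.card I) v = v := funext fun i => by simp [truncate]
  calc ∑ i, gain e f i (v i) v
      = ∑ m : Fin (Fintype.card I), (f (truncate e (m + 1) v) - f (truncate e m v)) :=
        Fintype.sum_equiv e _ _ fun i => by rw [gain, truncate_succ]
    _ = f v - f 0 := by
        rw [Fin.sum_univ_eq_sum_range (fun m => f (truncate e (m + 1) v) - f (truncate e m v)),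
          sum_range_sub (fun m => f (truncate e m v)), hcard, hzero]

/-- Telescope `f u - f 0` along `e` and compare each gain with the gain at `v ≥ u` by
submodularity. -/
theorem sum_ite_gain_le (hf : LatticeSubmodular f) {u v : Vec I B}
    (huv : ∀ i, u i = 0 ∨ u i = v i) :
    ∑ i, (if u i = v i then gain e f i (v i) v else 0) ≤ f u - f 0 := by
  rw [← sum_gain e u]
  refine sum_le_sum fun i _ => ?_
  split_ifs with h
  · exact h ▸ gain_antitone e hf i (v i) (le_of_forall_eq_zero_or_eq huv)
  · simp [(huv i).resolve_right h, gain_zero]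

end Gain

section Expectation

variable {I : Type} [Fintype I] [DecidableEq I] {B : ℕ} {q : I → Fin (B + 1) → ℝ}

theorem IsCRS.mul_sum_fiberProb_le {F : Set (Vec I B)} {α : ℝ} {ψ : Vec I B → Vec I B → ℝ}
    (h : IsCRS q F α ψ) (i : I) {j : Fin (B + 1)} (hj : j ≠ 0) :
    α * ∑ v, fiberProb q i j v ≤ ∑ v, fiberProb q i j v * keepProb ψ i v := by
  refine (h.2.2 i j hj).trans_eq (sum_congr rfl fun v _ => ?_)
  by_cases hv : v i = j
  · simp [fiberProb, keepProb, hv, mul_sum]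
  · simp [fiberProb, hv]

variable {k : ℕ} {F : Fin k → Set (Vec I B)} {α : Fin k → ℝ} {Ψ : Fin k → Vec I B → Vec I B → ℝ}

/-- Conditioned on `v i = j`, `G` and the keep probabilities of coordinate `i` are antitone
functions of `v`, so by Harris' inequality they are positively correlated. -/
theorem prod_mul_sum_fiberProb_le (hq : IsDist q) (hα : ∀ t, 0 ≤ α t)
    (hΨ : ∀ t, IsCRS q (F t) (α t) (Ψ t)) (hmono : ∀ t, MonotoneCRS (Ψ t)) (i : I)
    {j : Fin (B + 1)} (hj : j ≠ 0) {G : Vec I B → ℝ} (hG₀ : 0 ≤ G) (hG : Antitone G) :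
    (∏ t, α t) * ∑ v, fiberProb q i j v * G v ≤
      ∑ v, fiberProb q i j v * (G v * ∏ t, keepProb (Ψ t) i v) := by
  set μ : Vec I B → ℝ := fiberProb q i j
  set M : ℝ := ∑ v, μ v
  -- outside the fiber `v i = j` the keep probabilities are replaced by antitone extensions
  let κ t v := keepProb (Ψ t) i (Function.update v i j)
  have hκ₀ : ∀ t, 0 ≤ κ t := fun t v => keepProb_nonneg (hΨ t).1 i _
  have hκ : ∀ t, Antitone (κ t) := fun t a b hab =>
    hmono t _ _ i (update_le_update_iff.2 ⟨le_rfl, fun i' _ => hab i'⟩) (by simp)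
  have hαM : ∀ t, α t * M ≤ ∑ v, μ v * κ t v := fun t => by
    rw [sum_fiberProb_mul_update i j fun _ w => keepProb (Ψ t) i w]
    exact (hΨ t).mul_sum_fiberProb_le i hj
  have harris := sum_mul_prod_sum_le_of_antitone μ G κ univ (fiberProb_nonneg hq i j)
    (fiberProb_mul_fiberProb_le hq i j) hG₀ hG hκ₀ hκ
  rw [sum_fiberProb_mul_update i j fun v w => G v * ∏ t, keepProb (Ψ t) i w, card_univ,
    Fintype.card_fin] at harris
  rcases (sum_nonneg fun v _ => fiberProb_nonneg hq i j v : 0 ≤ M).eq_or_lt with hM | hM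
  · have hμ := (sum_eq_zero_iff_of_nonneg fun v _ => fiberProb_nonneg hq i j v).1 hM.symm
    simp [μ, hμ]
  refine le_of_mul_le_mul_left ?_ (pow_pos hM k)
  calc M ^ k * ((∏ t, α t) * ∑ v, μ v * G v)
      = (∏ t, α t * M) * ∑ v, μ v * G v := by
        rw [prod_mul_distrib, prod_const, card_univ, Fintype.card_fin]; ring
    _ ≤ (∏ t, ∑ v, μ v * κ t v) * ∑ v, μ v * G v :=
        mul_le_mul_of_nonneg_right (prod_le_prod (fun t _ => mul_nonneg (hα t) hM.le)
          fun t _ => hαM t) (sum_nonneg fun v _ => mul_nonneg (fiberProb_nonneg hq i j v) (hG₀ v))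
    _ ≤ M ^ k * ∑ v, μ v * (G v * ∏ t, keepProb (Ψ t) i v) := by
        rwa [mul_comm]

variable {f : Vec I B → ℝ} (e : I ≃ Fin (Fintype.card I))

theorem prod_mul_sum_vecProb_mul_gain_le (hq : IsDist q) (hf : Monotone f)
    (hf' : LatticeSubmodular f) (hα : ∀ t, 0 ≤ α t) (hΨ : ∀ t, IsCRS q (F t) (α t) (Ψ t))
    (hmono : ∀ t, MonotoneCRS (Ψ t)) (i : I) :
    (∏ t, α t) * ∑ v, vecProb q v * gain e f i (v i) v ≤
      ∑ v, vecProb q v * (gain e f i (v i) v * ∏ t, keepProb (Ψ t) i v) := by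
  rw [sum_vecProb_mul_eq_sum_sum_fiberProb i (gain e f i),
    sum_vecProb_mul_eq_sum_sum_fiberProb i fun j v => gain e f i j v * ∏ t, keepProb (Ψ t) i v,
    mul_sum]
  refine sum_le_sum fun j _ => ?_
  rcases eq_or_ne j 0 with rfl | hj
  · simp [gain_zero]
  · exact prod_mul_sum_fiberProb_le hq hα hΨ hmono i hj (gain_nonneg e hf i j)
      (gain_antitone e hf' i j)

theorem add_sum_gain_mul_keepProb_le (hf : LatticeSubmodular f) {ψ : Vec I B → Vec I B → ℝ}
    (hψ : IsKernel ψ) (hψ' : KeepsOrZeroes ψ) (v : Vec I B) :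
    f 0 + ∑ i, gain e f i (v i) v * keepProb ψ i v ≤ ∑ u, ψ v u * f u := by
  calc f 0 + ∑ i, gain e f i (v i) v * keepProb ψ i v
      = ∑ u, ψ v u * (f 0 + ∑ i, if u i = v i then gain e f i (v i) v else 0) := by
        simp only [mul_add, sum_add_distrib, ← sum_mul, hψ.2, one_mul, keepProb, mul_sum,
          mul_ite, mul_zero]
        rw [sum_comm]
        simp [mul_comm]
    _ ≤ ∑ u, ψ v u * f u := by
        refine sum_le_sum fun u _ => ?_
        by_cases hvu : ψ v u = 0
        · simp [hvu]
        · have := sum_ite_gain_le e hf (hψ' v u hvu)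
          exact mul_le_mul_of_nonneg_left (by linarith) (hψ.1 v u)

theorem prod_mul_sum_vecProb_mul_le_sum_kernelSeq (hq : IsDist q) (hf₀ : ∀ v, 0 ≤ f v)
    (hf : Monotone f) (hf' : LatticeSubmodular f) (hα : ∀ t, α t ∈ Set.Icc (0 : ℝ) 1)
    (hΨ : ∀ t, IsCRS q (F t) (α t) (Ψ t)) (hmono : ∀ t, MonotoneCRS (Ψ t)) :
    (∏ t, α t) * ∑ v, vecProb q v * f v ≤
      ∑ v, ∑ u, vecProb q v * kernelSeq k Ψ v u * f u := by
  let e := Fintype.equivFin I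
  set A := ∏ t, α t
  have hA : A ≤ 1 := prod_le_one (fun t _ => (hα t).1) fun t _ => (hα t).2
  have hψ := isKernel_kernelSeq fun t => (hΨ t).1
  have hψ' := keepsOrZeroes_kernelSeq fun t => (hΨ t).keepsOrZeroes
  calc A * ∑ v, vecProb q v * f v
      ≤ f 0 + A * ∑ v, vecProb q v * (f v - f 0) := by
        simp only [mul_sub, sum_sub_distrib, ← sum_mul, sum_vecProb hq]
        nlinarith [hf₀ 0]
    _ = f 0 + ∑ i, A * ∑ v, vecProb q v * gain e f i (v i) v := by
        simp only [← sum_gain e, mul_sum]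
        rw [sum_comm]
    _ ≤ f 0 + ∑ i, ∑ v, vecProb q v * (gain e f i (v i) v * keepProb (kernelSeq k Ψ) i v) := by
        refine add_le_add le_rfl (sum_le_sum fun i _ => ?_)
        refine (prod_mul_sum_vecProb_mul_gain_le e hq hf hf' (fun t => (hα t).1) hΨ hmono i).trans
          (sum_le_sum fun v _ => mul_le_mul_of_nonneg_left (mul_le_mul_of_nonneg_left ?_
            (gain_nonneg e hf i _ v)) (vecProb_nonneg hq v))
        exact prod_keepProb_le_keepProb_kernelSeq (fun t => (hΨ t).1)
          (fun t => (hΨ t).keepsOrZeroes) hmono i v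
    _ = ∑ v, vecProb q v * (f 0 + ∑ i, gain e f i (v i) v * keepProb (kernelSeq k Ψ) i v) := by
        simp only [mul_add, sum_add_distrib, ← sum_mul, sum_vecProb hq, one_mul, mul_sum]
        rw [sum_comm]
    _ ≤ ∑ v, vecProb q v * ∑ u, kernelSeq k Ψ v u * f u :=
        sum_le_sum fun v _ => mul_le_mul_of_nonneg_left
          (add_sum_gain_mul_keepProb_le e hf' hψ hψ' v) (vecProb_nonneg hq v)
    _ = ∑ v, ∑ u, vecProb q v * kernelSeq k Ψ v u * f u := by
        simp only [mul_sum, mul_assoc]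

end Expectation

/-- If each downward-closed family `F t` admits a monotone `α t`-CRS with respect to `q`,
and `f` is nonnegative, monotone and lattice submodular, then there is a randomized mapping
`ψ` whose output always lies in `⋂ t, F t`, keeps each coordinate of the input or zeroes it
out, and satisfies `E[f u] ≥ (∏ t, α t) ⬝ E[f v]` for `v ∼ q`, `u ∼ ψ v`. -/
theorem exists_CRS_intersection_expected_value
    {I : Type} [Fintype I] [DecidableEq I] {B : ℕ}
    (q : I → Fin (B + 1) → ℝ) (hq : IsDist q)
    (f : Vec I B → ℝ) (hf0 : ∀ v, 0 ≤ f v) (hfmono : Monotone f)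
    (hfsub : LatticeSubmodular f)
    (k : ℕ) (F : Fin k → Set (Vec I B)) (α : Fin k → ℝ)
    (hα : ∀ t, α t ∈ Set.Icc (0 : ℝ) 1)
    (hdc : ∀ t, DownwardClosed (F t))
    (hcrs : ∀ t, ∃ ψ : Vec I B → Vec I B → ℝ, IsCRS q (F t) (α t) ψ ∧ MonotoneCRS ψ) :
    ∃ ψ : Vec I B → Vec I B → ℝ, IsKernel ψ ∧
      (∀ v u, ψ v u ≠ 0 → u ∈ ⋂ t, F t ∧ ∀ i, u i = 0 ∨ u i = v i) ∧
      ∑ v : Vec I B, ∑ u : Vec I B, vecProb q v * ψ v u * f u ≥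
        (∏ t, α t) * ∑ v : Vec I B, vecProb q v * f v := by
  choose Ψ hΨ hmono using hcrs
  have hΨ' : ∀ t, KeepsOrZeroes (Ψ t) := fun t => (hΨ t).keepsOrZeroes
  refine ⟨kernelSeq k Ψ, isKernel_kernelSeq fun t => (hΨ t).1, fun v u h => ⟨?_, ?_⟩,
    prod_mul_sum_vecProb_mul_le_sum_kernelSeq hq hf0 hfmono hfsub hα hΨ hmono⟩
  · exact Set.mem_iInter.2 <| mem_of_kernelSeq_ne_zero hdc
      (fun t v u h => ((hΨ t).2.1 v u h).1) hΨ' h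
  · exact keepsOrZeroes_kernelSeq hΨ' v u h
end
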